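/- arXiv:1709.06789 — 2 statements merged into one kernel-verified Lean document; each statement's English description precedes it below -/
import Mathlib

section
/- Let A, B, C be finite simple matroids of rank at most 3 in K₀ with C ≤ A, C ≤ B, and A ∩ B = C. Let D = A ⊕_C B be the canonical amalgam (domain A ∪ B, with collinearity relation R^D = R^A ∪ R^B together with triples collinear via identification of lines of C). Then δ(D) = δ(A) + δ(B) - δ(C). -/
open scoped Classical

/-- A simple matroid of rank ≤ 3 presented as a 3-hypergraph `(V, R)`:
`R` is irreflexive, symmetric, and satisfies the exchange axiom
(if `R a b c` and `R a b d` then `{a,b,c,d}` is an `R`-clique). -/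
structure PlaneGeom (V : Type) where
  R : V → V → V → Prop
  irrefl : ∀ a b c, R a b c → a ≠ b ∧ b ≠ c ∧ a ≠ c
  symm₁ : ∀ a b c, R a b c → R b a c
  symm₂ : ∀ a b c, R a b c → R a c b
  exchange : ∀ a b c d, R a b c → R a b d → c ≠ d → R a c d

/-- A line `ℓ` is based in `B` if it contains at least two points of `B`. -/
def BasedIn {V : Type} [DecidableEq V] (ℓ B : Finset V) : Prop := 2 ≤ (ℓ ∩ B).card

namespace PlaneGeom

variable {V : Type} [Fintype V] [DecidableEq V] (G : PlaneGeom V)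

/-- A set of pairwise collinear points. -/
def IsClique (s : Finset V) : Prop :=
  ∀ a ∈ s, ∀ b ∈ s, ∀ c ∈ s, a ≠ b → b ≠ c → a ≠ c → G.R a b c

/-- A (nontrivial) line of the submatroid induced on `X`: a maximal
`R`-clique in `X` of size at least 3. -/
def IsLine (X ℓ : Finset V) : Prop :=
  ℓ ⊆ X ∧ 3 ≤ ℓ.card ∧ G.IsClique ℓ ∧
    ∀ p ∈ X, p ∉ ℓ → ¬ G.IsClique (insert p ℓ)

/-- The set of nontrivial lines of the submatroid induced on `X`. -/
noncomputable def lines (X : Finset V) : Finset (Finset V) :=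
  Finset.univ.filter (fun ℓ => G.IsLine X ℓ)

/-- The predimension function `δ(X) = |X| - Σ_{ℓ ∈ L(X)} (|ℓ| - 2)`. -/
noncomputable def delta (X : Finset V) : ℤ :=
  (X.card : ℤ) - ∑ ℓ ∈ G.lines X, ((ℓ.card : ℤ) - 2)

/-- `A ≤ B` : `A` is a strong substructure of `B`. -/
def Strong (A B : Finset V) : Prop :=
  A ⊆ B ∧ ∀ X : Finset V, A ⊆ X → X ⊆ B → G.delta A ≤ G.delta X

/-- Membership in the class `K₀`: hereditarily nonnegative `δ`. -/
def InK0 (A : Finset V) : Prop := ∀ A' ⊆ A, 0 ≤ G.delta A'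

/-- `B` is a primitive strong extension of `A`. -/
def Primitive (A B : Finset V) : Prop :=
  G.Strong A B ∧ A ≠ B ∧
    ∀ B₀ : Finset V, A ⊆ B₀ → B₀ ⊆ B → G.Strong A B₀ → G.Strong B₀ B →
      B₀ = A ∨ B₀ = B

end PlaneGeom

namespace PlaneGeom

/-- The submatroid induced on `A ∪ B` by the ambient geometry is the canonical
amalgam `A ⊕_{A ∩ B} B`: every nontrivial line of `A ∪ B` is a line of `A`, a
line of `B`, or the union of a line of `A` and a line of `B` sharing at least
two points of `C = A ∩ B`. -/
def IsCanonicalAmalgam {V : Type} [Fintype V] [DecidableEq V]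
    (G : PlaneGeom V) (A B : Finset V) : Prop :=
  ∀ ℓ ∈ G.lines (A ∪ B),
    ℓ ⊆ A ∨ ℓ ⊆ B ∨
      (2 ≤ (ℓ ∩ (A ∩ B)).card ∧ G.IsLine A (ℓ ∩ A) ∧ G.IsLine B (ℓ ∩ B))

end PlaneGeom

set_option linter.unusedSectionVars false
set_option linter.unusedTactic false
set_option linter.unusedVariables false

namespace PlaneGeom

variable {V : Type} [Fintype V] [DecidableEq V] {G : PlaneGeom V}

lemma clique_subset {s t : Finset V} (h : G.IsClique t) (hst : s ⊆ t) : G.IsClique s :=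
  fun a ha b hb c hc => h a (hst ha) b (hst hb) c (hst hc)

lemma clique_insert {ℓ : Finset V} {a b p : V} (hℓ : G.IsClique ℓ)
    (ha : a ∈ ℓ) (hb : b ∈ ℓ) (hab : a ≠ b) (hR : G.R a b p) (hp : p ∉ ℓ) :
    G.IsClique (insert p ℓ) := by
  have hpa : p ≠ a := fun h => hp (h ▸ ha)
  have hpb : p ≠ b := fun h => hp (h ▸ hb)
  have key : ∀ x ∈ ℓ, x ≠ a → G.R a x p := by
    intro x hx hxa
    by_cases hxb : x = b
    · subst hxb; exact hR
    · have h1 : G.R a b x := hℓ a ha b hb x hx hab (Ne.symm hxb) (Ne.symm hxa)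
      have h2 : G.R a p x := G.exchange a b p x hR h1 (Ne.symm (fun h => hp (h ▸ hx)))
      exact G.symm₂ _ _ _ h2
  have main : ∀ x ∈ ℓ, ∀ y ∈ ℓ, x ≠ y → G.R x y p := by
    intro x hx y hy hxy
    by_cases hxa : x = a
    · subst hxa; exact key y hy (Ne.symm hxy)
    · by_cases hya : y = a
      · subst hya; exact G.symm₁ _ _ _ (key x hx hxa)
      · have h1 : G.R a x p := key x hx hxa
        have h2 : G.R a x y := hℓ a ha x hx y hy (Ne.symm hxa) hxy (Ne.symm hya)
        have hpy : p ≠ y := fun h => hp (h ▸ hy)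
        have h3 : G.R x p y :=
          G.exchange x a p y (G.symm₁ _ _ _ h1) (G.symm₁ _ _ _ h2) hpy
        exact G.symm₂ _ _ _ h3
  intro x hx y hy z hz hxy hyz hxz
  rw [Finset.mem_insert] at hx hy hz
  rcases hx with rfl | hx
  · rcases hy with rfl | hy
    · exact absurd rfl hxy
    rcases hz with rfl | hz
    · exact absurd rfl hxz
    exact G.symm₁ _ _ _ (G.symm₂ _ _ _ (main y hy z hz hyz))
  rcases hy with rfl | hy
  · rcases hz with rfl | hz
    · exact absurd rfl hyz
    · exact G.symm₂ _ _ _ (main x hx z hz hxz)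
  rcases hz with rfl | hz
  · exact main x hx y hy hxy
  · exact hℓ x hx y hy z hz hxy hyz hxz

/-- A line of `X` restricted to `Y ⊆ X` is a line of `Y` if the restriction has ≥ 3 points. -/
lemma isLine_inter {X Y ℓ : Finset V} (hY : Y ⊆ X) (hℓ : G.IsLine X ℓ)
    (h3 : 3 ≤ (ℓ ∩ Y).card) : G.IsLine Y (ℓ ∩ Y) := by
  refine ⟨Finset.inter_subset_right, h3, clique_subset hℓ.2.2.1 Finset.inter_subset_left, ?_⟩
  intro p hp hpn hcl
  obtain ⟨a, ha, b, hb, hab⟩ := Finset.one_lt_card.mp (by omega : 1 < (ℓ ∩ Y).card)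
  have hpℓ : p ∉ ℓ := fun h => hpn (Finset.mem_inter.mpr ⟨h, hp⟩)
  have hpa : p ≠ a := fun h => hpℓ (h ▸ (Finset.mem_inter.mp ha).1)
  have hpb : p ≠ b := fun h => hpℓ (h ▸ (Finset.mem_inter.mp hb).1)
  have hR : G.R a b p := hcl a (Finset.mem_insert_of_mem ha) b (Finset.mem_insert_of_mem hb)
    p (Finset.mem_insert_self _ _) hab (Ne.symm hpb) (Ne.symm hpa)
  exact hℓ.2.2.2 p (hY hp) hpℓ
    (clique_insert hℓ.2.2.1 (Finset.mem_inter.mp ha).1 (Finset.mem_inter.mp hb).1 hab hR hpℓ)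

lemma line_subset_of_two {X ℓ ℓ' : Finset V} (h : G.IsLine X ℓ) (h' : G.IsLine X ℓ')
    (h2 : 2 ≤ (ℓ ∩ ℓ').card) : ℓ' ⊆ ℓ := by
  obtain ⟨a, ha, b, hb, hab⟩ := Finset.one_lt_card.mp (by omega : 1 < (ℓ ∩ ℓ').card)
  intro p hp
  by_contra hpℓ
  have hpa : p ≠ a := fun h => hpℓ (h ▸ (Finset.mem_inter.mp ha).1)
  have hpb : p ≠ b := fun h => hpℓ (h ▸ (Finset.mem_inter.mp hb).1)
  have hR : G.R a b p := h'.2.2.1 a (Finset.mem_inter.mp ha).2 b (Finset.mem_inter.mp hb).2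
    p hp hab (Ne.symm hpb) (Ne.symm hpa)
  exact h.2.2.2 p (h'.1 hp) hpℓ
    (clique_insert h.2.2.1 (Finset.mem_inter.mp ha).1 (Finset.mem_inter.mp hb).1 hab hR hpℓ)

lemma line_eq_of_two {X ℓ ℓ' : Finset V} (h : G.IsLine X ℓ) (h' : G.IsLine X ℓ')
    (h2 : 2 ≤ (ℓ ∩ ℓ').card) : ℓ = ℓ' := by
  have h2' : 2 ≤ (ℓ' ∩ ℓ).card := by rwa [Finset.inter_comm]
  exact Finset.Subset.antisymm (line_subset_of_two h' h h2') (line_subset_of_two h h' h2)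

lemma exists_line_ext {X s : Finset V} (hsX : s ⊆ X) (h3 : 3 ≤ s.card) (hs : G.IsClique s) :
    ∃ ℓ, G.IsLine X ℓ ∧ s ⊆ ℓ := by
  classical
  set T := X.powerset.filter (fun t => s ⊆ t ∧ G.IsClique t) with hT
  have hne : s ∈ T := by
    simp only [hT, Finset.mem_filter, Finset.mem_powerset]
    exact ⟨hsX, Finset.Subset.refl s, hs⟩
  obtain ⟨t, htT, hmax⟩ := T.exists_max_image Finset.card ⟨s, hne⟩
  simp only [hT, Finset.mem_filter, Finset.mem_powerset] at htT
  refine ⟨t, ⟨htT.1, le_trans h3 (Finset.card_le_card htT.2.1), htT.2.2, ?_⟩, htT.2.1⟩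
  intro p hp hpt hcl
  have hmem : insert p t ∈ T := by
    simp only [hT, Finset.mem_filter, Finset.mem_powerset]
    exact ⟨Finset.insert_subset hp htT.1, htT.2.1.trans (Finset.subset_insert _ _), hcl⟩
  have := hmax _ hmem
  rw [Finset.card_insert_of_notMem hpt] at this
  omega

lemma sum_lines_eq (G : PlaneGeom V) {Y X : Finset V} (hY : Y ⊆ X) :
    ∑ m ∈ G.lines Y, ((m.card : ℤ) - 2)
      = ∑ ℓ ∈ G.lines X, (if G.IsLine Y (ℓ ∩ Y) then ((ℓ ∩ Y).card : ℤ) - 2 else 0) := by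
  classical
  rw [← Finset.sum_filter]
  symm
  refine Finset.sum_bij (fun ℓ _ => ℓ ∩ Y) ?_ ?_ ?_ ?_
  · intro ℓ hℓ
    rw [Finset.mem_filter] at hℓ
    simp only [lines, Finset.mem_filter, Finset.mem_univ, true_and]
    exact hℓ.2
  · intro ℓ₁ h₁ ℓ₂ h₂ heq
    rw [Finset.mem_filter] at h₁ h₂
    simp only [lines, Finset.mem_filter, Finset.mem_univ, true_and] at h₁ h₂
    have heq' : ℓ₁ ∩ Y = ℓ₂ ∩ Y := heq
    have h3 : 3 ≤ (ℓ₁ ∩ Y).card := h₁.2.2.1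
    have hsub : ℓ₁ ∩ Y ⊆ ℓ₁ ∩ ℓ₂ := by
      intro x hx
      exact Finset.mem_inter.mpr ⟨(Finset.mem_inter.mp hx).1,
        Finset.inter_subset_left (heq' ▸ hx)⟩
    exact line_eq_of_two h₁.1 h₂.1 (le_trans (by omega) (Finset.card_le_card hsub))
  · intro m hm
    simp only [lines, Finset.mem_filter, Finset.mem_univ, true_and] at hm
    obtain ⟨ℓ, hℓ, hsub⟩ := exists_line_ext (hm.1.trans hY) hm.2.1 hm.2.2.1
    have h3 : 3 ≤ (ℓ ∩ Y).card := by
      have : m ⊆ ℓ ∩ Y := fun x hx => Finset.mem_inter.mpr ⟨hsub hx, hm.1 hx⟩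
      exact le_trans hm.2.1 (Finset.card_le_card this)
    have hline : G.IsLine Y (ℓ ∩ Y) := isLine_inter hY hℓ h3
    have heq : m = ℓ ∩ Y := by
      have hsub2 : m ⊆ m ∩ (ℓ ∩ Y) := fun x hx =>
        Finset.mem_inter.mpr ⟨hx, Finset.mem_inter.mpr ⟨hsub hx, hm.1 hx⟩⟩
      exact line_eq_of_two hm hline
        (le_trans (by omega : (2:ℕ) ≤ 3) (le_trans hm.2.1 (Finset.card_le_card hsub2)))
    refine ⟨ℓ, ?_, heq.symm⟩
    rw [Finset.mem_filter]
    simp only [lines, Finset.mem_filter, Finset.mem_univ, true_and]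
    exact ⟨hℓ, hline⟩
  · intro ℓ hℓ
    rfl

end PlaneGeom

namespace PlaneGeom

/-- Per-line identity in the canonical amalgam. -/
lemma per_line {V : Type} [Fintype V] [DecidableEq V] (G : PlaneGeom V)
    (A B : Finset V) (hD : G.IsCanonicalAmalgam A B) {ℓ : Finset V}
    (hℓ : ℓ ∈ G.lines (A ∪ B)) :
    ((ℓ.card : ℤ) - 2)
      = (if G.IsLine A (ℓ ∩ A) then ((ℓ ∩ A).card : ℤ) - 2 else 0)
        + (if G.IsLine B (ℓ ∩ B) then ((ℓ ∩ B).card : ℤ) - 2 else 0)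
        - (if G.IsLine (A ∩ B) (ℓ ∩ (A ∩ B)) then ((ℓ ∩ (A ∩ B)).card : ℤ) - 2 else 0) := by
  classical
  have hℓ' : G.IsLine (A ∪ B) ℓ := by
    simpa only [lines, Finset.mem_filter, Finset.mem_univ, true_and] using hℓ
  have hiffA : G.IsLine A (ℓ ∩ A) ↔ 3 ≤ (ℓ ∩ A).card :=
    ⟨fun h => h.2.1, fun h => isLine_inter Finset.subset_union_left hℓ' h⟩
  have hiffB : G.IsLine B (ℓ ∩ B) ↔ 3 ≤ (ℓ ∩ B).card :=
    ⟨fun h => h.2.1, fun h => isLine_inter Finset.subset_union_right hℓ' h⟩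
  have hCsub : A ∩ B ⊆ A ∪ B :=
    Finset.inter_subset_left.trans Finset.subset_union_left
  have hiffC : G.IsLine (A ∩ B) (ℓ ∩ (A ∩ B)) ↔ 3 ≤ (ℓ ∩ (A ∩ B)).card :=
    ⟨fun h => h.2.1, fun h => isLine_inter hCsub hℓ' h⟩
  have hcard : (ℓ ∩ A).card + (ℓ ∩ B).card = ℓ.card + (ℓ ∩ (A ∩ B)).card := by
    have h1 : (ℓ ∩ A) ∪ (ℓ ∩ B) = ℓ := by
      rw [← Finset.inter_union_distrib_left]
      exact Finset.inter_eq_left.mpr hℓ'.1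
    have h2 : (ℓ ∩ A) ∩ (ℓ ∩ B) = ℓ ∩ (A ∩ B) := by
      ext x; simp only [Finset.mem_inter]; tauto
    have := Finset.card_union_add_card_inter (ℓ ∩ A) (ℓ ∩ B)
    rw [h1, h2] at this
    omega
  have h3 : 3 ≤ ℓ.card := hℓ'.2.1
  simp only [if_congr hiffA rfl rfl, if_congr hiffB rfl rfl, if_congr hiffC rfl rfl]
  rcases hD ℓ hℓ with hsA | hsB | ⟨h2C, hLA, hLB⟩
  · have eA : ℓ ∩ A = ℓ := Finset.inter_eq_left.mpr hsA
    have eC : ℓ ∩ (A ∩ B) = ℓ ∩ B := by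
      rw [← Finset.inter_assoc, eA]
    rw [eA, eC]
    split_ifs <;> push_cast <;> omega
  · have eB : ℓ ∩ B = ℓ := Finset.inter_eq_left.mpr hsB
    have eC : ℓ ∩ (A ∩ B) = ℓ ∩ A := by
      rw [Finset.inter_comm A B, ← Finset.inter_assoc, eB]
    rw [eB, eC]
    split_ifs <;> push_cast <;> omega
  · have hA3 : 3 ≤ (ℓ ∩ A).card := hLA.2.1
    have hB3 : 3 ≤ (ℓ ∩ B).card := hLB.2.1
    split_ifs <;> push_cast <;> omega

end PlaneGeom


/-- for `C = A ∩ B` with `C ≤ A`, `C ≤ B` in `K₀`, the canonical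
amalgam `D = A ⊕_C B` satisfies `δ(D) = δ(A) + δ(B) - δ(C)`. -/
theorem stmt_8 {V : Type} [Fintype V] [DecidableEq V] (G : PlaneGeom V)
    (A B : Finset V) (hA : G.InK0 A) (hB : G.InK0 B)
    (hCA : G.Strong (A ∩ B) A) (hCB : G.Strong (A ∩ B) B)
    (hD : G.IsCanonicalAmalgam A B) :
    G.delta (A ∪ B) = G.delta A + G.delta B - G.delta (A ∩ B) := by
  classical
  have hCsub : A ∩ B ⊆ A ∪ B :=
    Finset.inter_subset_left.trans Finset.subset_union_left
  have hsA := G.sum_lines_eq (Finset.subset_union_left (s₁ := A) (s₂ := B))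
  have hsB := G.sum_lines_eq (Finset.subset_union_right (s₁ := A) (s₂ := B))
  have hsC := G.sum_lines_eq hCsub
  have hsum : ∑ ℓ ∈ G.lines (A ∪ B), ((ℓ.card : ℤ) - 2)
      = ∑ ℓ ∈ G.lines (A ∪ B),
          ((if G.IsLine A (ℓ ∩ A) then ((ℓ ∩ A).card : ℤ) - 2 else 0)
            + (if G.IsLine B (ℓ ∩ B) then ((ℓ ∩ B).card : ℤ) - 2 else 0)
            - (if G.IsLine (A ∩ B) (ℓ ∩ (A ∩ B)) then ((ℓ ∩ (A ∩ B)).card : ℤ) - 2 else 0)) :=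
    Finset.sum_congr rfl (fun ℓ hℓ => G.per_line A B hD hℓ)
  have hcards : (A ∪ B).card + (A ∩ B).card = A.card + B.card :=
    Finset.card_union_add_card_inter A B
  have hsplit : ∑ ℓ ∈ G.lines (A ∪ B),
          ((if G.IsLine A (ℓ ∩ A) then ((ℓ ∩ A).card : ℤ) - 2 else 0)
            + (if G.IsLine B (ℓ ∩ B) then ((ℓ ∩ B).card : ℤ) - 2 else 0)
            - (if G.IsLine (A ∩ B) (ℓ ∩ (A ∩ B)) then ((ℓ ∩ (A ∩ B)).card : ℤ) - 2 else 0))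
      = (∑ ℓ ∈ G.lines (A ∪ B), (if G.IsLine A (ℓ ∩ A) then ((ℓ ∩ A).card : ℤ) - 2 else 0))
        + (∑ ℓ ∈ G.lines (A ∪ B), (if G.IsLine B (ℓ ∩ B) then ((ℓ ∩ B).card : ℤ) - 2 else 0))
        - (∑ ℓ ∈ G.lines (A ∪ B),
            (if G.IsLine (A ∩ B) (ℓ ∩ (A ∩ B)) then ((ℓ ∩ (A ∩ B)).card : ℤ) - 2 else 0)) := by
    rw [Finset.sum_sub_distrib, Finset.sum_add_distrib]
  have hc : ((A ∪ B).card : ℤ) + ((A ∩ B).card : ℤ) = (A.card : ℤ) + (B.card : ℤ) := by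
    exact_mod_cast hcards
  unfold PlaneGeom.delta
  linarith [hsum, hsplit, hsA, hsB, hsC]
end

section
/- Let B ≤ C in K₀ be a primitive extension. Then either δ(C) - δ(B) = 1 and |C - B| = 1, or δ(C) - δ(B) = 0. -/
open scoped Classical

namespace PlaneGeom

variable {V : Type} [Fintype V] [DecidableEq V] (G : PlaneGeom V)

lemma isClique_subset {s t : Finset V} (h : s ⊆ t) (ht : G.IsClique t) : G.IsClique s :=
  fun a ha b hb c hc => ht a (h ha) b (h hb) c (h hc)

lemma mem_lines {X ℓ : Finset V} : ℓ ∈ G.lines X ↔ G.IsLine X ℓ := by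
  simp [lines]

lemma card_pos_of_line {X ℓ : Finset V} (h : ℓ ∈ G.lines X) : (0:ℤ) ≤ (ℓ.card : ℤ) - 2 := by
  have := ((G.mem_lines.1 h).2.1)
  have : (3:ℤ) ≤ (ℓ.card : ℤ) := by exact_mod_cast this
  omega

lemma delta_insert (b : V) (X : Finset V) :
    G.delta (insert b X) ≤ G.delta X + 1 := by
  by_cases hb : b ∈ X
  · rw [Finset.insert_eq_self.2 hb]; omega
  classical
  set f : Finset V → Finset V := fun ℓ => if G.IsClique (insert b ℓ) then insert b ℓ else ℓ
    with hf
  have hmem : ∀ ℓ ∈ G.lines X, f ℓ ∈ G.lines (insert b X) := by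
    intro ℓ hℓ
    obtain ⟨hsub, hcard, hcl, hmax⟩ := G.mem_lines.1 hℓ
    rw [G.mem_lines]
    by_cases hc : G.IsClique (insert b ℓ)
    · have hfe : f ℓ = insert b ℓ := if_pos hc
      rw [hfe]
      refine ⟨Finset.insert_subset_insert _ hsub,
        le_trans hcard (Finset.card_le_card (Finset.subset_insert _ _)), hc, ?_⟩
      intro p hp hpne hclp
      have hpb : p ≠ b := fun h => hpne (h ▸ Finset.mem_insert_self b ℓ)
      have hpX : p ∈ X := by
        rcases Finset.mem_insert.1 hp with h | h
        · exact absurd h hpb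
        · exact h
      have hpℓ : p ∉ ℓ := fun h => hpne (Finset.mem_insert_of_mem h)
      exact hmax p hpX hpℓ (G.isClique_subset
        (Finset.insert_subset_insert p (Finset.subset_insert b ℓ)) hclp)
    · have hfe : f ℓ = ℓ := if_neg hc
      rw [hfe]
      refine ⟨hsub.trans (Finset.subset_insert _ _), hcard, hcl, ?_⟩
      intro p hp hpℓ
      rcases Finset.mem_insert.1 hp with h | h
      · rw [h]; exact hc
      · exact hmax p h hpℓ
  have hinj : ∀ ℓ₁ ∈ G.lines X, ∀ ℓ₂ ∈ G.lines X, f ℓ₁ = f ℓ₂ → ℓ₁ = ℓ₂ := by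
    intro ℓ₁ h₁ ℓ₂ h₂ heq
    have hb₁ : b ∉ ℓ₁ := fun h => hb ((G.mem_lines.1 h₁).1 h)
    have hb₂ : b ∉ ℓ₂ := fun h => hb ((G.mem_lines.1 h₂).1 h)
    by_cases hc₁ : G.IsClique (insert b ℓ₁) <;> by_cases hc₂ : G.IsClique (insert b ℓ₂) <;>
      simp only [hf, hc₁, hc₂, if_true, if_false] at heq
    · have := congrArg (fun s => Finset.erase s b) heq
      simpa [Finset.erase_insert hb₁, Finset.erase_insert hb₂] using this
    · exact absurd (heq ▸ Finset.mem_insert_self b ℓ₁) hb₂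
    · exact absurd (heq.symm ▸ Finset.mem_insert_self b ℓ₂) hb₁
    · exact heq
  have hcardle : ∀ ℓ ∈ G.lines X, ((ℓ.card : ℤ) - 2) ≤ ((f ℓ).card : ℤ) - 2 := by
    intro ℓ hℓ
    have : ℓ ⊆ f ℓ := by
      by_cases hc : G.IsClique (insert b ℓ)
      · rw [hf]; simp only [if_pos hc]; exact Finset.subset_insert _ _
      · rw [hf]; simp only [if_neg hc]; exact Finset.Subset.refl ℓ
    have := Finset.card_le_card this
    have : (ℓ.card : ℤ) ≤ ((f ℓ).card : ℤ) := by exact_mod_cast this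
    omega
  have hsum : ∑ ℓ ∈ G.lines X, ((ℓ.card : ℤ) - 2) ≤
      ∑ ℓ ∈ G.lines (insert b X), ((ℓ.card : ℤ) - 2) := by
    calc ∑ ℓ ∈ G.lines X, ((ℓ.card : ℤ) - 2)
        ≤ ∑ ℓ ∈ G.lines X, (((f ℓ).card : ℤ) - 2) := Finset.sum_le_sum hcardle
      _ = ∑ m ∈ (G.lines X).image f, ((m.card : ℤ) - 2) :=
          (Finset.sum_image (f := fun m => ((m.card : ℤ) - 2)) hinj).symm
      _ ≤ ∑ ℓ ∈ G.lines (insert b X), ((ℓ.card : ℤ) - 2) := by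
          apply Finset.sum_le_sum_of_subset_of_nonneg
          · intro m hm
            obtain ⟨ℓ, hℓ, rfl⟩ := Finset.mem_image.1 hm
            exact hmem ℓ hℓ
          · intro m hm _; exact G.card_pos_of_line hm
  have hcard : ((insert b X).card : ℤ) ≤ (X.card : ℤ) + 1 := by
    have := Finset.card_insert_le b X
    exact_mod_cast this
  unfold delta
  omega

end PlaneGeom

theorem stmt_11 {V : Type} [Fintype V] [DecidableEq V] (G : PlaneGeom V)
    (B C : Finset V) (hC : G.InK0 C) (hprim : G.Primitive B C) :
    (G.delta C - G.delta B = 1 ∧ (C \ B).card = 1) ∨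
      G.delta C - G.delta B = 0 := by
  obtain ⟨⟨hBC, hstr⟩, hne, hmin⟩ := hprim
  classical
  set S := C.powerset.filter (fun X => B ⊆ X ∧ G.delta X = G.delta B) with hS
  have hBS : B ∈ S := by
    simp [hS, Finset.mem_powerset, hBC]
  obtain ⟨B₀, hB₀S, hmax⟩ := S.exists_max_image (fun X => X.card) ⟨B, hBS⟩
  have hB₀ : B₀ ⊆ C ∧ B ⊆ B₀ ∧ G.delta B₀ = G.delta B := by
    simpa [hS, Finset.mem_powerset] using hB₀S
  obtain ⟨h2, h1, h3⟩ := hB₀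
  have hstrB₀ : G.Strong B B₀ := ⟨h1, fun Y hY1 hY2 => hstr Y hY1 (hY2.trans h2)⟩
  have hstrB₀C : G.Strong B₀ C := by
    refine ⟨h2, fun Y hY1 hY2 => ?_⟩
    rw [h3]; exact hstr Y (h1.trans hY1) hY2
  rcases hmin B₀ h1 h2 hstrB₀ hstrB₀C with hcase | hcase
  · left
    have key : ∀ X, B ⊆ X → X ⊆ C → X ≠ B → G.delta B + 1 ≤ G.delta X := by
      intro X hX1 hX2 hX3
      have h4 : G.delta B ≤ G.delta X := hstr X hX1 hX2
      rcases lt_or_eq_of_le h4 with h | h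
      · omega
      · exfalso; apply hX3
        have hXS : X ∈ S := by
          simp only [hS, Finset.mem_filter, Finset.mem_powerset]
          exact ⟨hX2, hX1, h.symm⟩
        have hle := hmax X hXS
        rw [hcase] at hle
        exact (Finset.eq_of_subset_of_card_le hX1 hle).symm
    obtain ⟨b, hbC, hbB⟩ := Finset.exists_of_ssubset (hBC.ssubset_of_ne hne)
    set D := insert b B with hD
    have hDC : D ⊆ C := Finset.insert_subset hbC hBC
    have hDne : D ≠ B := fun h => hbB (h ▸ Finset.mem_insert_self b B)
    have hδD : G.delta D = G.delta B + 1 := by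
      have hk := key D (Finset.subset_insert b B) hDC hDne
      have hi := G.delta_insert b B
      rw [← hD] at hi
      omega
    have hstrBD : G.Strong B D :=
      ⟨Finset.subset_insert b B, fun Y hY1 hY2 => hstr Y hY1 (hY2.trans hDC)⟩
    have hstrDC : G.Strong D C := by
      refine ⟨hDC, fun Y hY1 hY2 => ?_⟩
      have hYB : Y ≠ B := fun h => hbB (h ▸ hY1 (Finset.mem_insert_self b B))
      have := key Y ((Finset.subset_insert b B).trans hY1) hY2 hYB
      omega
    rcases hmin D (Finset.subset_insert b B) hDC hstrBD hstrDC with h | h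
    · exact absurd h hDne
    · constructor
      · rw [← h]; omega
      · rw [← h, hD, Finset.insert_sdiff_cancel hbB, Finset.card_singleton]
  · right; rw [hcase] at h3; omega
end
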